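/- (Lemma 3.9) The isoperimetric constant of the metric graph G vanishes if and only if the isoperimetric constant at infinity vanishes: α(G) = 0 ⟺ α_ess(G) = 0. -/

import Mathlib

open scoped Classical ENNReal
open MeasureTheory

noncomputable section

/-- A real function on `[0, L]` which is continuous and piecewise continuously
differentiable: there is a finite partition `0 = x 0 < x 1 < ... < x n = L` such that
on each closed piece the function has a continuous derivative. -/
def PiecewiseC1 (f : ℝ → ℝ) (L : ℝ) : Prop :=
  ContinuousOn f (Set.Icc 0 L) ∧
  ∃ (n : ℕ) (x : Fin (n + 1) → ℝ), x 0 = 0 ∧ x (Fin.last n) = L ∧ StrictMono x ∧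
    ∀ i : Fin n, ∃ g : ℝ → ℝ,
      ContinuousOn g (Set.Icc (x i.castSucc) (x i.succ)) ∧
      ∀ t ∈ Set.Icc (x i.castSucc) (x i.succ),
        HasDerivWithinAt f (g t) (Set.Icc (x i.castSucc) (x i.succ)) t

/-- The underlying (unoriented) simple graph of a set of edges `E` with endpoint
map `ends : E → V × V`. -/
def graphOf {V E : Type} (ends : E → V × V) : SimpleGraph V :=
  SimpleGraph.fromRel fun u v => ∃ e, ends e = (u, v)

/-- A metric graph: a connected, locally finite, simple combinatorial graph with
countably infinite vertex and edge sets, each edge having a finite positive length.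
Each edge carries an (auxiliary) orientation given by `ends`. -/
structure MetricGraph : Type 1 where
  V : Type
  E : Type
  countV : Countable V
  infV : Infinite V
  countE : Countable E
  infE : Infinite E
  ends : E → V × V
  len : E → ℝ
  len_pos : ∀ e, 0 < len e
  no_loops : ∀ e, (ends e).1 ≠ (ends e).2
  no_multi : Function.Injective fun e => Sym2.mk (ends e)
  locfin : ∀ v, {e | (ends e).1 = v ∨ (ends e).2 = v}.Finite
  conn : (graphOf ends).Connected

namespace MetricGraph

/-- The underlying simple graph. -/
def graph (Γ : MetricGraph) : SimpleGraph Γ.V := graphOf Γ.ends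

/-- The star of a vertex: the set of edges incident to it. -/
def star (Γ : MetricGraph) (v : Γ.V) : Set Γ.E :=
  {e | (Γ.ends e).1 = v ∨ (Γ.ends e).2 = v}

/-- Combinatorial degree of a vertex. -/
def degree (Γ : MetricGraph) (v : Γ.V) : ℕ := (Γ.locfin v).toFinset.card

/-- The vertices of a (finite) subgraph given by a finite set of edges. -/
def vertsOf (Γ : MetricGraph) (F : Finset Γ.E) : Finset Γ.V :=
  F.image (fun e => (Γ.ends e).1) ∪ F.image fun e => (Γ.ends e).2

/-- The degree of a vertex inside the subgraph given by the edge set `F`. -/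
def degIn (Γ : MetricGraph) (F : Finset Γ.E) (v : Γ.V) : ℕ :=
  (F.filter fun e => (Γ.ends e).1 = v ∨ (Γ.ends e).2 = v).card

/-- Connectedness of the subgraph spanned by the edge set `F`. -/
def SubConn (Γ : MetricGraph) (F : Finset Γ.E) : Prop :=
  ((SimpleGraph.fromRel fun u v => ∃ e ∈ F, Γ.ends e = (u, v)).induce
    (↑(Γ.vertsOf F) : Set Γ.V)).Connected

/-- A finite connected subgraph (with at least one edge), given by its edge set. -/
def IsFinSubgraph (Γ : MetricGraph) (F : Finset Γ.E) : Prop :=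
  F.Nonempty ∧ Γ.SubConn F

/-- The boundary of a finite subgraph with respect to `Γ`: the vertices whose degree
in the subgraph is strictly smaller than the degree in `Γ`. -/
def bdry (Γ : MetricGraph) (F : Finset Γ.E) : Finset Γ.V :=
  (Γ.vertsOf F).filter fun v => Γ.degIn F v < Γ.degree v

/-- `deg (∂_G G̃)`. -/
def degBdry (Γ : MetricGraph) (F : Finset Γ.E) : ℝ :=
  ∑ v ∈ Γ.bdry F, (Γ.degIn F v : ℝ)

/-- The total length (Lebesgue measure) of a finite subgraph. -/
def mes (Γ : MetricGraph) (F : Finset Γ.E) : ℝ := ∑ e ∈ F, Γ.len e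

/-- The isoperimetric (Cheeger) constant of a metric graph. -/
def alpha (Γ : MetricGraph) : ℝ :=
  sInf {r : ℝ | ∃ F : Finset Γ.E, Γ.IsFinSubgraph F ∧ r = Γ.degBdry F / Γ.mes F}

/-- The isoperimetric constant at infinity, as an element of `[0,∞]`. -/
def alphaEssEnn (Γ : MetricGraph) : ℝ≥0∞ :=
  ⨆ W : Finset Γ.E, ⨅ (F : Finset Γ.E) (_ : Γ.IsFinSubgraph F ∧ Disjoint F W),
    ENNReal.ofReal (Γ.degBdry F / Γ.mes F)

/-- The vertex weight `m(v) = Σ_{e ∈ E_v} |e|`. -/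
def mweight (Γ : MetricGraph) (v : Γ.V) : ℝ :=
  ∑ e ∈ (Γ.locfin v).toFinset, Γ.len e

/-- The set of boundary edges of a vertex set: edges with exactly one endpoint in `X`. -/
def Eb (Γ : MetricGraph) (X : Set Γ.V) : Set Γ.E :=
  {e | Xor' ((Γ.ends e).1 ∈ X) ((Γ.ends e).2 ∈ X)}

/-- The discrete isoperimetric constant of a vertex set `U`. -/
def alphaD (Γ : MetricGraph) (U : Set Γ.V) : ℝ :=
  sInf {r : ℝ | ∃ X : Finset Γ.V, ↑X ⊆ U ∧ X.Nonempty ∧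
    r = ((Γ.Eb ↑X).ncard : ℝ) / ∑ v ∈ X, Γ.mweight v}

/-- The discrete isoperimetric constant at infinity, as an element of `[0,∞]`. -/
def alphaDEssEnn (Γ : MetricGraph) : ℝ≥0∞ :=
  ⨆ X : Finset Γ.V, ENNReal.ofReal (Γ.alphaD (↑X : Set Γ.V)ᶜ)

/-- The combinatorial isoperimetric constant. -/
def alphaComb (Γ : MetricGraph) : ℝ :=
  sInf {r : ℝ | ∃ X : Finset Γ.V, X.Nonempty ∧
    r = ((Γ.Eb ↑X).ncard : ℝ) / ∑ v ∈ X, (Γ.degree v : ℝ)}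

/-- `ℓ*(G) = sup of edge lengths`. -/
def ellSup (Γ : MetricGraph) : ℝ := sSup (Set.range Γ.len)

/-- `ℓ_*(G) = inf of edge lengths`. -/
def ellInf (Γ : MetricGraph) : ℝ := sInf (Set.range Γ.len)

/-- `ℓ*(G)` as an element of `[0,∞]`. -/
def ellSupEnn (Γ : MetricGraph) : ℝ≥0∞ := ⨆ e : Γ.E, ENNReal.ofReal (Γ.len e)

/-- `ℓ*_ess(G) = inf_F sup_{e ∉ F} |e|` as an element of `[0,∞]`. -/
def ellSupEssEnn (Γ : MetricGraph) : ℝ≥0∞ :=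
  ⨅ W : Finset Γ.E, ⨆ e : {e : Γ.E // e ∉ W}, ENNReal.ofReal (Γ.len (e : Γ.E))

/-- Outgoing edges at a vertex (for the fixed orientation). -/
def plusE (Γ : MetricGraph) (v : Γ.V) : Set Γ.E := {e | (Γ.ends e).1 = v}

/-- Incoming edges at a vertex (for the fixed orientation). -/
def minusE (Γ : MetricGraph) (v : Γ.V) : Set Γ.E := {e | (Γ.ends e).2 = v}

/-- The curvature `K(v) = ((#E_v⁺ − #E_v⁻)/#E_v⁺) · inf_{e ∈ E_v⁺} 1/|e|`. -/
def Kcurv (Γ : MetricGraph) (v : Γ.V) : ℝ :=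
  (((Γ.plusE v).ncard : ℝ) - ((Γ.minusE v).ncard : ℝ)) / ((Γ.plusE v).ncard : ℝ) *
    sInf ((fun e => 1 / Γ.len e) '' Γ.plusE v)

/-- The combinatorial curvature `K_comb(v) = 1 − #E_v⁻/#E_v⁺`. -/
def Kcomb (Γ : MetricGraph) (v : Γ.V) : ℝ :=
  1 - ((Γ.minusE v).ncard : ℝ) / ((Γ.plusE v).ncard : ℝ)

/-- `liminf_{v ∈ V} K(v) = sup over finite W of inf_{v ∉ W} K(v)`, in `[0,∞]`. -/
def KcurvEssEnn (Γ : MetricGraph) : ℝ≥0∞ :=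
  ⨆ W : Finset Γ.V, ⨅ v : {v : Γ.V // v ∉ W}, ENNReal.ofReal (Γ.Kcurv (v : Γ.V))

/-- `liminf_{v ∈ V} K_comb(v) = sup over finite W of inf_{v ∉ W} K_comb(v)`. -/
def KcombLiminf (Γ : MetricGraph) : ℝ :=
  sSup (Set.range fun W : Finset Γ.V => sInf (Γ.Kcomb '' (↑W : Set Γ.V)ᶜ))

/-- The value of an edgewise function at an endpoint of an edge. -/
def endVal (Γ : MetricGraph) (f : Γ.E → ℝ → ℝ) (e : Γ.E) (v : Γ.V) : ℝ :=
  if (Γ.ends e).1 = v then f e 0 else f e (Γ.len e)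

/-- A test function on the metric graph `Γ`: a family of continuous, piecewise `C¹`
functions on the edges, matching at the vertices, vanishing on all but finitely
many edges. -/
structure TestFun (Γ : MetricGraph) where
  f : Γ.E → ℝ → ℝ
  piecewise : ∀ e, PiecewiseC1 (f e) (Γ.len e)
  vertexCont : ∀ e e' : Γ.E, ∀ v : Γ.V, e ∈ Γ.star v → e' ∈ Γ.star v →
    Γ.endVal f e v = Γ.endVal f e' v
  finSupp : {e : Γ.E | ∃ x ∈ Set.Icc 0 (Γ.len e), f e x ≠ 0}.Finite

/-- `‖f‖² = Σ_e ∫₀^{|e|} f_e(x)² dx`. -/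
def TestFun.normSq {Γ : MetricGraph} (φ : TestFun Γ) : ℝ :=
  ∑ᶠ e : Γ.E, ∫ x in (0:ℝ)..Γ.len e, (φ.f e x) ^ 2

/-- `‖f′‖² = Σ_e ∫₀^{|e|} f_e′(x)² dx`. -/
def TestFun.energySq {Γ : MetricGraph} (φ : TestFun Γ) : ℝ :=
  ∑ᶠ e : Γ.E, ∫ x in (0:ℝ)..Γ.len e, (deriv (φ.f e) x) ^ 2

/-- A test function is nonzero if it does not vanish identically on the graph. -/
def TestFun.Nonzero {Γ : MetricGraph} (φ : TestFun Γ) : Prop :=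
  ∃ e : Γ.E, ∃ x ∈ Set.Icc 0 (Γ.len e), φ.f e x ≠ 0

/-- The bottom of the spectrum of the Kirchhoff Laplacian, via the variational
(Rayleigh quotient) characterization. -/
def lambda0 (Γ : MetricGraph) : ℝ :=
  sInf {r : ℝ | ∃ φ : TestFun Γ, φ.Nonzero ∧ r = φ.energySq / φ.normSq}

end MetricGraph

/-- A weighted graph `(V, m, b)`: a connected, locally finite, simple combinatorial
graph with countably infinite vertex and edge sets, an edge weight `b` and a vertex
weight `m`. -/
structure WeightedGraph : Type 1 where
  V : Type
  E : Type
  countV : Countable V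
  infV : Infinite V
  countE : Countable E
  infE : Infinite E
  ends : E → V × V
  no_loops : ∀ e, (ends e).1 ≠ (ends e).2
  no_multi : Function.Injective fun e => Sym2.mk (ends e)
  locfin : ∀ v, {e | (ends e).1 = v ∨ (ends e).2 = v}.Finite
  conn : (graphOf ends).Connected
  b : E → ℝ
  b_pos : ∀ e, 0 < b e
  m : V → ℝ
  m_pos : ∀ v, 0 < m v

namespace WeightedGraph

/-- An edge weight `d` is intrinsic if `Σ_{e ∈ E_v} d(e)² b(e) ≤ m(v)` for all `v`. -/
def Intrinsic (Γ : WeightedGraph) (d : Γ.E → ℝ) : Prop :=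
  ∀ v, ∑ e ∈ (Γ.locfin v).toFinset, d e ^ 2 * Γ.b e ≤ Γ.m v

/-- The boundary edges of a vertex set: edges with exactly one endpoint in `X`. -/
def Eb (Γ : WeightedGraph) (X : Set Γ.V) : Set Γ.E :=
  {e | Xor' ((Γ.ends e).1 ∈ X) ((Γ.ends e).2 ∈ X)}

/-- The discrete isoperimetric constant `α_d(U)` with respect to the weight `d`. -/
def alphaD (Γ : WeightedGraph) (d : Γ.E → ℝ) (U : Set Γ.V) : ℝ :=
  sInf {r : ℝ | ∃ X : Finset Γ.V, ↑X ⊆ U ∧ X.Nonempty ∧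
    r = (∑ᶠ e ∈ Γ.Eb ↑X, d e * Γ.b e) / ∑ v ∈ X, Γ.m v}

/-- The discrete isoperimetric constant at infinity, in `[0,∞]`. -/
def alphaDEssEnn (Γ : WeightedGraph) (d : Γ.E → ℝ) : ℝ≥0∞ :=
  ⨆ X : Finset Γ.V, ENNReal.ofReal (Γ.alphaD d (↑X : Set Γ.V)ᶜ)

/-- The energy form `Q(u) = Σ_e b(e) (u(e_i) − u(e_0))²`. -/
def Q (Γ : WeightedGraph) (u : Γ.V → ℝ) : ℝ :=
  ∑ᶠ e : Γ.E, Γ.b e * (u (Γ.ends e).2 - u (Γ.ends e).1) ^ 2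

/-- The squared norm `Σ_v m(v) u(v)²`. -/
def normSqD (Γ : WeightedGraph) (u : Γ.V → ℝ) : ℝ :=
  ∑ᶠ v : Γ.V, Γ.m v * u v ^ 2

/-- The bottom of the spectrum of the Friedrichs extension of the weighted Laplacian,
via the variational characterization over finitely supported functions. -/
def lambda0 (Γ : WeightedGraph) : ℝ :=
  sInf {r : ℝ | ∃ u : Γ.V → ℝ, (Function.support u).Finite ∧ u ≠ 0 ∧
    r = Γ.Q u / Γ.normSqD u}

/-- The bottom of the essential spectrum of the Friedrichs extension, via Glazman's
decomposition principle, in `[0,∞]`. -/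
def lambda0EssEnn (Γ : WeightedGraph) : ℝ≥0∞ :=
  ⨆ X : Finset Γ.V, ⨅ (u : Γ.V → ℝ)
    (_ : (Function.support u).Finite ∧ u ≠ 0 ∧ ∀ v ∈ X, u v = 0),
      ENNReal.ofReal (Γ.Q u / Γ.normSqD u)

end WeightedGraph

end

/-!
If `α(G) = 0`, there are finite connected subgraphs `F` with `deg ∂F < δ · mes F` for
every `δ > 0`. Since `G` is infinite and connected, `∂F` is nonempty, so `deg ∂F ≥ 1`
and `mes F → ∞`. Deleting from such an `F` the edges that meet a fixed finite edge set
`W` costs a bounded amount of length and creates a bounded amount of boundary, so the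
rest still has a small ratio, and by the mediant inequality so does one of its
connected components, which avoids `W`. The converse is the case `W = ∅`.
-/

lemma iInf_ofReal_eq_zero_iff {ι : Type*} {P : ι → Prop} {g : ι → ℝ} :
    (⨅ (i : ι) (_ : P i), ENNReal.ofReal (g i)) = 0 ↔ ∀ ε > 0, ∃ i, P i ∧ g i < ε := by
  constructor
  · intro h ε hε
    have : (⨅ (i : ι) (_ : P i), ENNReal.ofReal (g i)) < ENNReal.ofReal ε := by
      rwa [h, ENNReal.ofReal_pos]
    obtain ⟨i, hi⟩ := iInf_lt_iff.mp this
    obtain ⟨hPi, hgi⟩ := iInf_lt_iff.mp hi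
    exact ⟨i, hPi, (ENNReal.ofReal_lt_ofReal_iff'.mp hgi).1⟩
  · refine fun h => iInf_eq_bot.mpr fun b hb => ?_
    obtain ⟨ε, -, hε0, hεb⟩ := ENNReal.lt_iff_exists_real_btwn.mp hb
    obtain ⟨i, hPi, hgi⟩ := h ε (ENNReal.ofReal_pos.mp hε0)
    refine ⟨i, iInf_lt_iff.mpr ⟨hPi, lt_of_le_of_lt ?_ hεb⟩⟩
    exact ENNReal.ofReal_le_ofReal hgi.le

/-- Read `d` and `x` as `deg ∂F` and `mes F`: since `deg ∂F ≥ 1`, a small ratio forces `mes F` to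
be large, so that losing length `M` and gaining boundary `C` keeps the ratio small. -/
lemma exists_pos_small_ratio_bound {C M ε : ℝ} (hC : 0 ≤ C) (hM : 0 ≤ M) (hε : 0 < ε) :
    ∃ δ > 0, ∀ d x : ℝ, 1 ≤ d → d < δ * x → 2 * M < x ∧ 2 * (d + C) < ε * x := by
  set δ := min (1 / (2 * M + 1)) (ε / (2 * (C + 1)))
  refine ⟨δ, by positivity, fun d x hd hdx => ?_⟩
  have h1 : 1 < δ * x := hd.trans_lt hdx
  have hx : 0 < x := pos_of_mul_pos_right (one_pos.trans h1) (by positivity)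
  constructor
  · have : δ * x ≤ x / (2 * M + 1) := by
      calc δ * x ≤ 1 / (2 * M + 1) * x := by gcongr; exact min_le_left _ _
        _ = x / (2 * M + 1) := by ring
    have := (lt_div_iff₀ (by positivity)).mp (h1.trans_le this)
    linarith
  · have : δ * x * (2 * (C + 1)) ≤ ε * x := by
      calc δ * x * (2 * (C + 1)) ≤ ε / (2 * (C + 1)) * x * (2 * (C + 1)) := by
            gcongr; exact min_le_right _ _
        _ = ε * x := by field_simp
    nlinarith [mul_le_mul_of_nonneg_left h1.le hC]

namespace MetricGraph

variable (Γ : MetricGraph)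

lemma mem_vertsOf {F : Finset Γ.E} {v : Γ.V} :
    v ∈ Γ.vertsOf F ↔ ∃ e ∈ F, e ∈ Γ.star v := by
  simp only [vertsOf, Finset.mem_union, Finset.mem_image]
  constructor
  · rintro (⟨e, he, h⟩ | ⟨e, he, h⟩)
    exacts [⟨e, he, Or.inl h⟩, ⟨e, he, Or.inr h⟩]
  · rintro ⟨e, he, h | h⟩
    exacts [Or.inl ⟨e, he, h⟩, Or.inr ⟨e, he, h⟩]

lemma mem_star_ends_fst (e : Γ.E) : e ∈ Γ.star (Γ.ends e).1 := Or.inl rfl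

lemma vertsOf_mono {F F' : Finset Γ.E} (h : F ⊆ F') : Γ.vertsOf F ⊆ Γ.vertsOf F' := by
  intro v hv
  obtain ⟨e, he, hv⟩ := Γ.mem_vertsOf.mp hv
  exact Γ.mem_vertsOf.mpr ⟨e, h he, hv⟩

lemma mes_pos {F : Finset Γ.E} (hF : F.Nonempty) : 0 < Γ.mes F :=
  Finset.sum_pos (fun e _ => Γ.len_pos e) hF

lemma degBdry_nonneg (F : Finset Γ.E) : 0 ≤ Γ.degBdry F :=
  Finset.sum_nonneg fun _ _ => Nat.cast_nonneg _

lemma degIn_le_degree (F : Finset Γ.E) (v : Γ.V) : Γ.degIn F v ≤ Γ.degree v :=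
  Finset.card_le_card fun _ he => (Γ.locfin v).mem_toFinset.mpr (Finset.mem_filter.mp he).2

lemma one_le_degIn {F : Finset Γ.E} {v : Γ.V} (hv : v ∈ Γ.vertsOf F) : 1 ≤ Γ.degIn F v := by
  obtain ⟨e, he, hev⟩ := Γ.mem_vertsOf.mp hv
  exact Finset.card_pos.mpr ⟨e, Finset.mem_filter.mpr ⟨he, hev⟩⟩

lemma mem_of_degIn_eq_degree {F : Finset Γ.E} {v : Γ.V} (h : Γ.degIn F v = Γ.degree v)
    {e : Γ.E} (he : e ∈ Γ.star v) : e ∈ F := by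
  have hsub :
      F.filter (fun e => (Γ.ends e).1 = v ∨ (Γ.ends e).2 = v) ⊆ (Γ.locfin v).toFinset :=
    fun g hg => (Γ.locfin v).mem_toFinset.mpr (Finset.mem_filter.mp hg).2
  have heq := Finset.eq_of_subset_of_card_le hsub h.ge
  have he' : e ∈ (Γ.locfin v).toFinset := (Γ.locfin v).mem_toFinset.mpr he
  rw [← heq] at he'
  exact (Finset.mem_filter.mp he').1

lemma degIn_eq_of_notMem_vertsOf_sdiff {A F : Finset Γ.E} (hAF : A ⊆ F) {v : Γ.V}
    (hv : v ∉ Γ.vertsOf (F \ A)) : Γ.degIn A v = Γ.degIn F v := by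
  refine congrArg Finset.card (Finset.Subset.antisymm (Finset.filter_subset_filter _ hAF) ?_)
  intro e he
  obtain ⟨heF, hev⟩ := Finset.mem_filter.mp he
  by_contra heA
  exact hv (Γ.mem_vertsOf.mpr ⟨e, Finset.mem_sdiff.mpr ⟨heF, fun h => heA
    (Finset.mem_filter.mpr ⟨h, hev⟩)⟩, hev⟩)

lemma exists_edge_of_adj {u w : Γ.V} (h : Γ.graph.Adj u w) :
    ∃ e, e ∈ Γ.star u ∧ e ∈ Γ.star w := by
  obtain ⟨-, ⟨e, he⟩ | ⟨e, he⟩⟩ := (SimpleGraph.fromRel_adj _ u w).mp h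
  · exact ⟨e, by simp [star, he]⟩
  · exact ⟨e, by simp [star, he]⟩

def spanned (F : Finset Γ.E) : SimpleGraph (Γ.vertsOf F : Set Γ.V) :=
  (SimpleGraph.fromRel fun u v => ∃ e ∈ F, Γ.ends e = (u, v)).induce (Γ.vertsOf F : Set Γ.V)

lemma subConn_iff {F : Finset Γ.E} : Γ.SubConn F ↔ (Γ.spanned F).Connected := Iff.rfl

lemma spanned_reachable {F : Finset Γ.E} {e : Γ.E} (he : e ∈ F)
    {u v : (Γ.vertsOf F : Set Γ.V)} (hu : e ∈ Γ.star u) (hv : e ∈ Γ.star v) :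
    (Γ.spanned F).Reachable u v := by
  by_cases huv : u = v
  · rw [huv]
  have hadj : (SimpleGraph.fromRel fun a b => ∃ e ∈ F, Γ.ends e = (a, b)).Adj u v := by
    refine (SimpleGraph.fromRel_adj _ _ _).mpr ⟨fun h => huv (Subtype.ext h), ?_⟩
    rcases hu with hu | hu <;> rcases hv with hv | hv
    · exact absurd (Subtype.ext (hu.symm.trans hv)) huv
    · exact Or.inl ⟨e, he, Prod.ext hu hv⟩
    · exact Or.inr ⟨e, he, Prod.ext hv hu⟩
    · exact absurd (Subtype.ext (hu.symm.trans hv)) huv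
  exact SimpleGraph.Adj.reachable hadj

lemma bdry_nonempty {F : Finset Γ.E} (hF : F.Nonempty) : (Γ.bdry F).Nonempty := by
  by_contra hempty
  have hfull : ∀ v ∈ Γ.vertsOf F, Γ.degIn F v = Γ.degree v := fun v hv =>
    (Γ.degIn_le_degree F v).eq_of_not_lt fun hlt =>
      hempty ⟨v, Finset.mem_filter.mpr ⟨hv, hlt⟩⟩
  have hclosed :
      ∀ {u w : Γ.V}, Γ.graph.Walk u w → u ∈ Γ.vertsOf F → w ∈ Γ.vertsOf F := by
    intro u w p
    induction p with
    | nil => exact id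
    | cons hadj _ ih =>
      intro hu
      obtain ⟨e, heu, hew⟩ := Γ.exists_edge_of_adj hadj
      exact ih (Γ.mem_vertsOf.mpr ⟨e, Γ.mem_of_degIn_eq_degree (hfull _ hu) heu, hew⟩)
  obtain ⟨e, he⟩ := hF
  have := Γ.infV
  obtain ⟨w, hw⟩ := Infinite.exists_notMem_finset (Γ.vertsOf F)
  obtain ⟨p⟩ := Γ.conn.preconnected (Γ.ends e).1 w
  exact hw (hclosed p (Γ.mem_vertsOf.mpr ⟨e, he, Γ.mem_star_ends_fst e⟩))

lemma one_le_degBdry {F : Finset Γ.E} (hF : F.Nonempty) : 1 ≤ Γ.degBdry F := by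
  obtain ⟨v, hv⟩ := Γ.bdry_nonempty hF
  calc (1 : ℝ) ≤ Γ.degIn F v := by exact_mod_cast Γ.one_le_degIn (Finset.mem_filter.mp hv).1
    _ ≤ Γ.degBdry F := Finset.single_le_sum (fun _ _ => Nat.cast_nonneg _) hv

lemma isFinSubgraph_singleton (e : Γ.E) : Γ.IsFinSubgraph {e} := by
  have hbase : (Γ.ends e).1 ∈ Γ.vertsOf {e} :=
    Γ.mem_vertsOf.mpr ⟨e, Finset.mem_singleton_self e, Γ.mem_star_ends_fst e⟩
  refine ⟨Finset.singleton_nonempty e, Γ.subConn_iff.mpr <|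
    (SimpleGraph.connected_iff _).mpr ⟨?_, ⟨⟨_, hbase⟩⟩⟩⟩
  rintro ⟨u, hu⟩ ⟨v, hv⟩
  obtain ⟨_, heu, hue⟩ := Γ.mem_vertsOf.mp hu
  obtain ⟨_, hev, hve⟩ := Γ.mem_vertsOf.mp hv
  rw [Finset.mem_singleton] at heu hev
  subst heu hev
  exact Γ.spanned_reachable (Finset.mem_singleton_self _) hue hve

def AdjIn (A : Finset Γ.E) (g h : Γ.E) : Prop :=
  g ∈ A ∧ h ∈ A ∧ ∃ v, g ∈ Γ.star v ∧ h ∈ Γ.star v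

instance (A : Finset Γ.E) : Std.Symm (Γ.AdjIn A) :=
  ⟨fun _ _ ⟨hg, hh, v, hgv, hhv⟩ => ⟨hh, hg, v, hhv, hgv⟩⟩

noncomputable def component (A : Finset Γ.E) (e : Γ.E) : Finset Γ.E :=
  A.filter (Relation.ReflTransGen (Γ.AdjIn A) e)

section Components

variable {Γ}

lemma component_subset (A : Finset Γ.E) (e : Γ.E) : Γ.component A e ⊆ A :=
  Finset.filter_subset _ _

lemma mem_component_self {A : Finset Γ.E} {e : Γ.E} (he : e ∈ A) : e ∈ Γ.component A e :=
  Finset.mem_filter.mpr ⟨he, .refl⟩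

lemma mem_component_of_adjIn {A : Finset Γ.E} {e g h : Γ.E} (hg : g ∈ Γ.component A e)
    (hgh : Γ.AdjIn A g h) : h ∈ Γ.component A e :=
  Finset.mem_filter.mpr ⟨hgh.2.1, (Finset.mem_filter.mp hg).2.tail hgh⟩

lemma component_eq_of_mem {A : Finset Γ.E} {e g : Γ.E} (hg : g ∈ Γ.component A e) :
    Γ.component A g = Γ.component A e := by
  have heg := (Finset.mem_filter.mp hg).2
  ext h
  simp only [component, Finset.mem_filter, and_congr_right_iff]
  exact fun _ => ⟨heg.trans, fun heh => (Std.Symm.symm _ _ heg).trans heh⟩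

lemma component_eq_of_mem_vertsOf {A : Finset Γ.E} {e e' : Γ.E} {v : Γ.V}
    (hv : v ∈ Γ.vertsOf (Γ.component A e)) (hv' : v ∈ Γ.vertsOf (Γ.component A e')) :
    Γ.component A e = Γ.component A e' := by
  obtain ⟨g, hg, hgv⟩ := Γ.mem_vertsOf.mp hv
  obtain ⟨g', hg', hg'v⟩ := Γ.mem_vertsOf.mp hv'
  have hadj : Γ.AdjIn A g g' :=
    ⟨component_subset A e hg, component_subset A e' hg', v, hgv, hg'v⟩
  rw [← component_eq_of_mem (mem_component_of_adjIn hg hadj), component_eq_of_mem hg']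

lemma degIn_component {A : Finset Γ.E} {e : Γ.E} {v : Γ.V}
    (hv : v ∈ Γ.vertsOf (Γ.component A e)) : Γ.degIn (Γ.component A e) v = Γ.degIn A v := by
  refine congrArg Finset.card (Finset.Subset.antisymm
    (Finset.filter_subset_filter _ (component_subset A e)) fun h hh => ?_)
  obtain ⟨hA, hhv⟩ := Finset.mem_filter.mp hh
  obtain ⟨g, hg, hgv⟩ := Γ.mem_vertsOf.mp hv
  exact Finset.mem_filter.mpr
    ⟨mem_component_of_adjIn hg ⟨component_subset A e hg, hA, v, hgv, hhv⟩, hhv⟩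

lemma isFinSubgraph_component {A : Finset Γ.E} {e : Γ.E} (he : e ∈ A) :
    Γ.IsFinSubgraph (Γ.component A e) := by
  set Y := Γ.component A e
  have hbase : (Γ.ends e).1 ∈ Γ.vertsOf Y :=
    Γ.mem_vertsOf.mpr ⟨e, mem_component_self he, Γ.mem_star_ends_fst e⟩
  have hreach : ∀ g, Relation.ReflTransGen (Γ.AdjIn A) e g →
      ∀ u : (Γ.vertsOf Y : Set Γ.V), g ∈ Γ.star u →
        (Γ.spanned Y).Reachable ⟨_, hbase⟩ u := by
    intro g hg
    induction hg with
    | refl =>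
      exact fun u hu => Γ.spanned_reachable (mem_component_self he) (Γ.mem_star_ends_fst e) hu
    | tail heg hgh ih =>
      have hgY : _ ∈ Y := Finset.mem_filter.mpr ⟨hgh.1, heg⟩
      have hhY : _ ∈ Y := mem_component_of_adjIn hgY hgh
      obtain ⟨-, -, w, hgw, hhw⟩ := hgh
      have hw : w ∈ Γ.vertsOf Y := Γ.mem_vertsOf.mpr ⟨_, hgY, hgw⟩
      exact fun u hu => (ih ⟨w, hw⟩ hgw).trans (Γ.spanned_reachable hhY hhw hu)
  refine ⟨⟨e, mem_component_self he⟩, Γ.subConn_iff.mpr <|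
    (SimpleGraph.connected_iff _).mpr ⟨fun u v => ?_, ⟨⟨_, hbase⟩⟩⟩⟩
  obtain ⟨g, hg, hgu⟩ := Γ.mem_vertsOf.mp u.2
  obtain ⟨g', hg', hg'v⟩ := Γ.mem_vertsOf.mp v.2
  exact (hreach g (Finset.mem_filter.mp hg).2 u hgu).symm.trans
    (hreach g' (Finset.mem_filter.mp hg').2 v hg'v)

lemma pairwiseDisjoint_components (A : Finset Γ.E) :
    ((A.image (Γ.component A) : Set (Finset Γ.E))).PairwiseDisjoint id := by
  simp only [Finset.coe_image]
  rintro _ ⟨e, -, rfl⟩ _ ⟨e', -, rfl⟩ hne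
  refine Finset.disjoint_left.mpr fun g hg hg' => hne ?_
  exact (component_eq_of_mem hg).symm.trans (component_eq_of_mem hg')

lemma pairwiseDisjoint_bdry_components (A : Finset Γ.E) :
    ((A.image (Γ.component A) : Set (Finset Γ.E))).PairwiseDisjoint Γ.bdry := by
  simp only [Finset.coe_image]
  rintro _ ⟨e, -, rfl⟩ _ ⟨e', -, rfl⟩ hne
  exact Finset.disjoint_left.mpr fun _ hv hv' =>
    hne (component_eq_of_mem_vertsOf (Finset.mem_filter.mp hv).1 (Finset.mem_filter.mp hv').1)

lemma biUnion_components (A : Finset Γ.E) : (A.image (Γ.component A)).biUnion id = A := by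
  ext g
  simp only [Finset.mem_biUnion, Finset.mem_image, id, exists_exists_and_eq_and]
  exact ⟨fun ⟨e, _, hg⟩ => component_subset A e hg,
    fun hg => ⟨g, hg, mem_component_self hg⟩⟩

lemma sum_mes_components (A : Finset Γ.E) :
    ∑ Y ∈ A.image (Γ.component A), Γ.mes Y = Γ.mes A := by
  conv_rhs => rw [← biUnion_components A]
  exact (Finset.sum_biUnion (pairwiseDisjoint_components A)).symm

lemma sum_degBdry_components_le (A : Finset Γ.E) :
    ∑ Y ∈ A.image (Γ.component A), Γ.degBdry Y ≤ Γ.degBdry A := by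
  have hYA : ∀ Y ∈ A.image (Γ.component A),
      Γ.degBdry Y = ∑ v ∈ Γ.bdry Y, (Γ.degIn A v : ℝ) := by
    simp only [Finset.mem_image]
    rintro _ ⟨e, -, rfl⟩
    exact Finset.sum_congr rfl fun v hv => by rw [degIn_component (Finset.mem_filter.mp hv).1]
  rw [Finset.sum_congr rfl hYA, ← Finset.sum_biUnion (pairwiseDisjoint_bdry_components A)]
  refine Finset.sum_le_sum_of_subset_of_nonneg (fun v hv => ?_) fun _ _ _ => Nat.cast_nonneg _
  obtain ⟨_, he, hv⟩ := Finset.mem_biUnion.mp hv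
  obtain ⟨e, -, rfl⟩ := Finset.mem_image.mp he
  obtain ⟨hvY, hlt⟩ := Finset.mem_filter.mp hv
  exact Finset.mem_filter.mpr
    ⟨Γ.vertsOf_mono (component_subset A e) hvY, degIn_component hvY ▸ hlt⟩

/-- The mediant inequality applied to the decomposition of `A` into components. -/
lemma exists_component_ratio_le {A : Finset Γ.E} (hA : A.Nonempty) :
    ∃ e ∈ A, Γ.degBdry (Γ.component A e) / Γ.mes (Γ.component A e) ≤
      Γ.degBdry A / Γ.mes A := by
  set r := Γ.degBdry A / Γ.mes A
  have hsum : ∑ Y ∈ A.image (Γ.component A), Γ.degBdry Y ≤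
      ∑ Y ∈ A.image (Γ.component A), r * Γ.mes Y := by
    rw [← Finset.mul_sum, sum_mes_components, div_mul_cancel₀ _ (Γ.mes_pos hA).ne']
    exact sum_degBdry_components_le A
  obtain ⟨_, hY, hle⟩ := Finset.exists_le_of_sum_le (hA.image _) hsum
  obtain ⟨e, he, rfl⟩ := Finset.mem_image.mp hY
  exact ⟨e, he, (div_le_iff₀ (Γ.mes_pos ⟨e, mem_component_self he⟩)).mpr hle⟩

end Components

noncomputable def edgeNbhd (W : Finset Γ.E) : Finset Γ.E :=
  (Γ.vertsOf W).biUnion fun v => (Γ.locfin v).toFinset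

lemma subset_edgeNbhd (W : Finset Γ.E) : W ⊆ Γ.edgeNbhd W := fun e he =>
  Finset.mem_biUnion.mpr ⟨_, Γ.mem_vertsOf.mpr ⟨e, he, Γ.mem_star_ends_fst e⟩,
    (Γ.locfin _).mem_toFinset.mpr (Γ.mem_star_ends_fst e)⟩

/-- Outside the endpoints of the deleted edges `F \ A`, the boundaries of `A` and `F` agree. -/
lemma degBdry_le_of_subset {A F : Finset Γ.E} (hAF : A ⊆ F) :
    Γ.degBdry A ≤ Γ.degBdry F + ∑ v ∈ Γ.vertsOf (F \ A), (Γ.degree v : ℝ) := by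
  set N := Γ.vertsOf (F \ A)
  rw [degBdry, ← Finset.sum_filter_add_sum_filter_not (Γ.bdry A) (· ∈ N), add_comm]
  gcongr ?_ + ?_
  · calc ∑ v ∈ (Γ.bdry A).filter (· ∉ N), (Γ.degIn A v : ℝ)
        = ∑ v ∈ (Γ.bdry A).filter (· ∉ N), (Γ.degIn F v : ℝ) :=
          Finset.sum_congr rfl fun v hv => by
            rw [Γ.degIn_eq_of_notMem_vertsOf_sdiff hAF (Finset.mem_filter.mp hv).2]
      _ ≤ Γ.degBdry F := by
          refine Finset.sum_le_sum_of_subset_of_nonneg (fun v hv => ?_)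
            fun _ _ _ => Nat.cast_nonneg _
          obtain ⟨hvA, hvN⟩ := Finset.mem_filter.mp hv
          obtain ⟨hvA, hlt⟩ := Finset.mem_filter.mp hvA
          rw [Γ.degIn_eq_of_notMem_vertsOf_sdiff hAF hvN] at hlt
          exact Finset.mem_filter.mpr ⟨Γ.vertsOf_mono hAF hvA, hlt⟩
  · calc ∑ v ∈ (Γ.bdry A).filter (· ∈ N), (Γ.degIn A v : ℝ)
        ≤ ∑ v ∈ (Γ.bdry A).filter (· ∈ N), (Γ.degree v : ℝ) :=
          Finset.sum_le_sum fun v _ => by exact_mod_cast Γ.degIn_le_degree A v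
      _ ≤ ∑ v ∈ N, (Γ.degree v : ℝ) :=
          Finset.sum_le_sum_of_subset_of_nonneg (fun v hv => (Finset.mem_filter.mp hv).2)
            fun _ _ _ => Nat.cast_nonneg _

lemma mes_le_mes_sdiff_add (F N : Finset Γ.E) : Γ.mes F ≤ Γ.mes (F \ N) + Γ.mes N := by
  rw [mes, ← Finset.sum_sdiff (Finset.inter_subset_left : F ∩ N ⊆ F),
    Finset.sdiff_inter_self_left]
  exact add_le_add_right (Finset.sum_le_sum_of_subset_of_nonneg Finset.inter_subset_right
    fun e _ _ => (Γ.len_pos e).le) _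

lemma degBdry_sdiff_le (F N : Finset Γ.E) :
    Γ.degBdry (F \ N) ≤ Γ.degBdry F + ∑ v ∈ Γ.vertsOf N, (Γ.degree v : ℝ) := by
  refine (Γ.degBdry_le_of_subset Finset.sdiff_subset).trans (add_le_add_right ?_ _)
  refine Finset.sum_le_sum_of_subset_of_nonneg (Γ.vertsOf_mono fun e he => ?_)
    fun _ _ _ => Nat.cast_nonneg _
  simp only [Finset.mem_sdiff, not_and, not_not] at he
  exact he.2 he.1

lemma exists_isFinSubgraph_disjoint_ratio_lt
    (h : ∀ δ > 0, ∃ F, Γ.IsFinSubgraph F ∧ Γ.degBdry F / Γ.mes F < δ)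
    (W : Finset Γ.E) {ε : ℝ} (hε : 0 < ε) :
    ∃ Y, Γ.IsFinSubgraph Y ∧ Disjoint Y W ∧ Γ.degBdry Y / Γ.mes Y < ε := by
  set N := Γ.edgeNbhd W
  obtain ⟨δ, hδ, hthreshold⟩ :=
    exists_pos_small_ratio_bound (C := ∑ v ∈ Γ.vertsOf N, (Γ.degree v : ℝ)) (M := Γ.mes N)
      (Finset.sum_nonneg fun v _ => (Γ.degree v).cast_nonneg)
      (Finset.sum_nonneg fun e _ => (Γ.len_pos e).le) hε
  obtain ⟨F, hF, hFδ⟩ := h δ hδ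
  obtain ⟨hlong, hsmall⟩ :=
    hthreshold _ _ (Γ.one_le_degBdry hF.1) ((div_lt_iff₀ (Γ.mes_pos hF.1)).mp hFδ)
  have hmes := Γ.mes_le_mes_sdiff_add F N
  have hdeg := Γ.degBdry_sdiff_le F N
  set A := F \ N
  have hApos : 0 < Γ.mes A := by linarith [Γ.mes_pos hF.1]
  have hAε : Γ.degBdry A / Γ.mes A < ε := by
    rw [div_lt_iff₀ hApos]
    nlinarith [mul_lt_mul_of_pos_left (show Γ.mes F < 2 * Γ.mes A by linarith) hε]
  obtain ⟨e, he, hle⟩ := exists_component_ratio_le (Finset.nonempty_of_sum_ne_zero hApos.ne')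
  refine ⟨_, isFinSubgraph_component he, ?_, hle.trans_lt hAε⟩
  exact Finset.disjoint_of_subset_left (component_subset A e)
    (Finset.disjoint_of_subset_right (Γ.subset_edgeNbhd W) Finset.sdiff_disjoint)

lemma alpha_eq_zero_iff :
    Γ.alpha = 0 ↔ ∀ ε > 0, ∃ F, Γ.IsFinSubgraph F ∧ Γ.degBdry F / Γ.mes F < ε := by
  have hnonneg :
      ∀ r ∈ {r : ℝ | ∃ F, Γ.IsFinSubgraph F ∧ r = Γ.degBdry F / Γ.mes F}, 0 ≤ r := by
    rintro r ⟨F, hF, rfl⟩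
    exact div_nonneg (Γ.degBdry_nonneg F) (Γ.mes_pos hF.1).le
  constructor
  · intro h ε hε
    have := Γ.infE
    obtain ⟨e⟩ := this.nonempty
    have hne : {r : ℝ | ∃ F, Γ.IsFinSubgraph F ∧ r = Γ.degBdry F / Γ.mes F}.Nonempty :=
      ⟨_, {e}, Γ.isFinSubgraph_singleton e, rfl⟩
    obtain ⟨r, ⟨F, hF, rfl⟩, hr⟩ := exists_lt_of_csInf_lt hne (h.trans_lt hε)
    exact ⟨F, hF, hr⟩
  · intro h
    obtain ⟨F, hF, -⟩ := h 1 one_pos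
    refine csInf_eq_of_forall_ge_of_forall_gt_exists_lt ⟨_, F, hF, rfl⟩ hnonneg fun ε hε => ?_
    obtain ⟨F, hF, hFε⟩ := h ε hε
    exact ⟨_, ⟨F, hF, rfl⟩, hFε⟩

lemma alphaEssEnn_eq_zero_iff :
    Γ.alphaEssEnn = 0 ↔ ∀ W : Finset Γ.E, ∀ ε > 0,
      ∃ F, Γ.IsFinSubgraph F ∧ Disjoint F W ∧ Γ.degBdry F / Γ.mes F < ε := by
  simp only [alphaEssEnn, ENNReal.iSup_eq_zero, iInf_ofReal_eq_zero_iff, and_assoc]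

end MetricGraph

/-- **Lemma 3.9.** `α(G) = 0 ⟺ α_ess(G) = 0`. -/
theorem alpha_eq_zero_iff_alphaEss_eq_zero (Γ : MetricGraph) :
    Γ.alpha = 0 ↔ Γ.alphaEssEnn = 0 := by
  rw [Γ.alpha_eq_zero_iff, Γ.alphaEssEnn_eq_zero_iff]
  refine ⟨fun h W _ => Γ.exists_isFinSubgraph_disjoint_ratio_lt h W, fun h ε hε => ?_⟩
  obtain ⟨F, hF, -, hFε⟩ := h ∅ ε hε
  exact ⟨F, hF, hFε⟩
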